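/- arXiv:1607.04555 — 3 statements merged into one kernel-verified Lean document; each statement's English description precedes it below -/
import Mathlib

section
/- Let F = (f₁,…,f_k) be a k-uple of pairwise commuting holomorphic self-maps of 𝔹^q, let (𝔹^d, ℓ, T) be a semi-model for F with ball base and let (𝔹^m, h, Φ) be a quasi-model for F with ball base. Then: (1) there exists at most one morphism, i.e., if η, β : 𝔹^d → 𝔹^m are holomorphic maps satisfying η ∘ ℓ = h = β ∘ ℓ and η ∘ τ_j = φ_j ∘ η, β ∘ τ_j = φ_j ∘ β for all 1 ≤ j ≤ k, then η = β; (2) if η : 𝔹^d → 𝔹^m is such a morphism, then η(𝔹^d) = ⋃_{N∈ℕ^k} Φ^{−N}(h(𝔹^q)). -/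
open Set Filter

noncomputable section

/-- `E q` is `ℂ^q` as a Euclidean (Hermitian) space. -/
abbrev E (q : ℕ) : Type := EuclideanSpace ℂ (Fin q)

/-- The open unit ball `𝔹^q ⊂ ℂ^q`. -/
def B (q : ℕ) : Set (E q) := Metric.ball 0 1

/-- A holomorphic map from `𝔹^q` to `𝔹^d`: it maps the ball into the ball and is
complex differentiable on the ball. -/
def HolMap (q d : ℕ) (f : E q → E d) : Prop :=
  Set.MapsTo f (B q) (B d) ∧ DifferentiableOn ℂ f (B q)

/-- An automorphism of `𝔹^d`: a holomorphic self-map with a holomorphic inverse on the ball. -/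
def IsAut (d : ℕ) (τ : E d → E d) : Prop :=
  HolMap d d τ ∧ ∃ σ : E d → E d, HolMap d d σ ∧
    Set.EqOn (σ ∘ τ) id (B d) ∧ Set.EqOn (τ ∘ σ) id (B d)

/-- `iterT f N = f₁^{n₁} ∘ ⋯ ∘ f_k^{n_k}` for a `k`-uple `f` and a multi-index `N ∈ ℕ^k`. -/
def iterT {α : Type} {k : ℕ} (f : Fin k → α → α) (N : Fin k → ℕ) : α → α :=
  (List.ofFn fun j => (f j)^[N j]).foldr (· ∘ ·) id

/-- Pairwise commutation (on the ball) of a `k`-uple of self-maps. -/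
def CommutingOn (q k : ℕ) (f : Fin k → E q → E q) : Prop :=
  ∀ i j, Set.EqOn (f i ∘ f j) (f j ∘ f i) (B q)

/-- A quasi-model with ball base for the `k`-uple `f`. -/
def IsQuasiModel (q d k : ℕ) (f : Fin k → E q → E q) (ℓ : E q → E d)
    (τ : Fin k → E d → E d) : Prop :=
  HolMap q d ℓ ∧ (∀ j, IsAut d (τ j)) ∧
    (∀ i j, Set.EqOn (τ i ∘ τ j) (τ j ∘ τ i) (B d)) ∧
    (∀ j, Set.EqOn (ℓ ∘ f j) (τ j ∘ ℓ) (B q))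

/-- A semi-model with ball base: a quasi-model with `⋃_{N ∈ ℕ^k} T^{-N}(ℓ(𝔹^q)) = 𝔹^d`,
where `T^{-N}(S)` is expressed as `{y ∈ 𝔹^d | T^N y ∈ S}`. -/
def IsSemiModel (q d k : ℕ) (f : Fin k → E q → E q) (ℓ : E q → E d)
    (τ : Fin k → E d → E d) : Prop :=
  IsQuasiModel q d k f ℓ τ ∧
    (⋃ N : Fin k → ℕ, B d ∩ (iterT τ N) ⁻¹' (ℓ '' B q)) = B d

/-- A canonical Kobayashi hyperbolic semi-model (CSM) with ball base: a semi-model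
through which every quasi-model with ball base (necessarily uniquely) factorizes. -/
def IsCSM (q d k : ℕ) (f : Fin k → E q → E q) (ℓ : E q → E d)
    (τ : Fin k → E d → E d) : Prop :=
  IsSemiModel q d k f ℓ τ ∧
    ∀ (m : ℕ) (h : E q → E m) (φ : Fin k → E m → E m),
      IsQuasiModel q m k f h φ →
      ∃ η : E d → E m, HolMap d m η ∧ Set.EqOn (η ∘ ℓ) h (B q) ∧
        ∀ j, Set.EqOn (η ∘ τ j) (φ j ∘ η) (B d)

/-- Inverse hyperbolic tangent. -/
def arctanh (t : ℝ) : ℝ := Real.log ((1 + t) / (1 - t)) / 2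

/-- The Kobayashi distance of the unit ball `𝔹^q`:
`k_{𝔹^q}(z,w) = arctanh √(1 − (1−‖z‖²)(1−‖w‖²)/|1−⟨z,w⟩|²)`. -/
def kob (q : ℕ) (z w : E q) : ℝ :=
  arctanh (Real.sqrt (1 - ((1 - ‖z‖ ^ 2) * (1 - ‖w‖ ^ 2)) /
    ‖(1 - (inner ℂ z w : ℂ))‖ ^ 2))

/-- The Kobayashi ball of center `p` and radius `r` in `𝔹^q`. -/
def Bk (q : ℕ) (p : E q) (r : ℝ) : Set (E q) := {z ∈ B q | kob q z p < r}

/-- `p ∈ ∂𝔹^q` is the Denjoy–Wolff point of `f`: the iterates of `f` converge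
locally uniformly on `𝔹^q` to the constant `p`. -/
def IsDW (q : ℕ) (f : E q → E q) (p : E q) : Prop :=
  ‖p‖ = 1 ∧
    TendstoLocallyUniformlyOn (fun n z => f^[n] z) (fun _ => p) Filter.atTop (B q)

/-- The dilation `λ = liminf_{z→p} (1−‖f(z)‖)/(1−‖z‖)` of `f` at a boundary point `p`. -/
def dilation (q : ℕ) (f : E q → E q) (p : E q) : ℝ :=
  Filter.liminf (fun z => (1 - ‖f z‖) / (1 - ‖z‖)) (nhdsWithin p (B q))

/-- The rank of the complex differential of `f` at `y`. -/
def rankAt (q d : ℕ) (f : E q → E d) (y : E q) : ℕ :=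
  Module.finrank ℂ (LinearMap.range (fderiv ℂ f y).toLinearMap)

/-- A quasi-model with ball base for a single self-map `f`. -/
def IsQuasiModel1 (q d : ℕ) (f : E q → E q) (ℓ : E q → E d) (τ : E d → E d) : Prop :=
  HolMap q d ℓ ∧ IsAut d τ ∧ Set.EqOn (ℓ ∘ f) (τ ∘ ℓ) (B q)

/-- A semi-model with ball base for a single self-map `f`. -/
def IsSemiModel1 (q d : ℕ) (f : E q → E q) (ℓ : E q → E d) (τ : E d → E d) : Prop :=
  IsQuasiModel1 q d f ℓ τ ∧ (⋃ n : ℕ, B d ∩ τ^[n] ⁻¹' (ℓ '' B q)) = B d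

/-- A canonical Kobayashi hyperbolic semi-model with ball base for a single self-map `f`. -/
def IsCSM1 (q d : ℕ) (f : E q → E q) (ℓ : E q → E d) (τ : E d → E d) : Prop :=
  IsSemiModel1 q d f ℓ τ ∧
    ∀ (m : ℕ) (h : E q → E m) (φ : E m → E m), IsQuasiModel1 q m f h φ →
      ∃ η : E d → E m, HolMap d m η ∧ Set.EqOn (η ∘ ℓ) h (B q) ∧
        Set.EqOn (η ∘ τ) (φ ∘ η) (B d)

/-!
Every `y ∈ 𝔹^d` is sent by some `T^N` to a point `ℓ(x)`, and a morphism `η` must then satisfy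
`Φ^N(η y) = η(T^N y) = h(x)`. Since `Φ^N` is injective on `𝔹^m`, this determines `η y` and
places it in `Φ^{-N}(h(𝔹^q))`. Conversely, if `Φ^N w = h(x)`, surjectivity of `T^N` on `𝔹^d`
gives `y` with `T^N y = ℓ(x)`, and injectivity of `Φ^N` turns `Φ^N(η y) = h(x) = Φ^N w` into
`η y = w`.
-/

open Set Function

section Iterates

variable {α β : Type} {s : Set α}

lemma Set.EqOn.comp_iterate_eq_iterate_comp {g : α → α} {g' : β → β} {η : α → β}
    (hg : MapsTo g s s) (hη : EqOn (η ∘ g) (g' ∘ η) s) (n : ℕ) :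
    EqOn (η ∘ g^[n]) (g'^[n] ∘ η) s := by
  induction n with
  | zero => exact fun _ _ => rfl
  | succ n ih =>
    intro x hx
    have hn : η (g^[n] x) = g'^[n] (η x) := ih hx
    simp only [comp_apply, iterate_succ_apply', ← hn]
    exact hη (hg.iterate n hx)

lemma iterT_succ {k : ℕ} (f : Fin (k + 1) → α → α) (N : Fin (k + 1) → ℕ) :
    iterT f N = (f 0)^[N 0] ∘ iterT (Fin.tail f) (Fin.tail N) := by
  simp only [iterT, List.ofFn_succ, List.foldr_cons]
  rfl

lemma Set.MapsTo.iterT {k : ℕ} {f : Fin k → α → α} (hf : ∀ j, MapsTo (f j) s s)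
    (N : Fin k → ℕ) : MapsTo (iterT f N) s s := by
  induction k with
  | zero => exact mapsTo_id s
  | succ k ih =>
    rw [iterT_succ]
    exact ((hf 0).iterate (N 0)).comp (ih (fun j => hf j.succ) _)

lemma Set.BijOn.iterT {k : ℕ} {f : Fin k → α → α} (hf : ∀ j, BijOn (f j) s s)
    (N : Fin k → ℕ) : BijOn (iterT f N) s s := by
  induction k with
  | zero => exact bijOn_id s
  | succ k ih =>
    rw [iterT_succ]
    exact ((hf 0).iterate (N 0)).comp (ih (fun j => hf j.succ) _)

lemma Set.EqOn.comp_iterT_eq_iterT_comp {k : ℕ} {f : Fin k → α → α} {g : Fin k → β → β}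
    {η : α → β} (hf : ∀ j, MapsTo (f j) s s) (hη : ∀ j, EqOn (η ∘ f j) (g j ∘ η) s)
    (N : Fin k → ℕ) : EqOn (η ∘ iterT f N) (iterT g N ∘ η) s := by
  induction k with
  | zero => exact fun _ _ => rfl
  | succ k ih =>
    intro x hx
    have htail :
        η (iterT (Fin.tail f) (Fin.tail N) x) = iterT (Fin.tail g) (Fin.tail N) (η x) :=
      ih (fun j => hf j.succ) (fun j => hη j.succ) _ hx
    simp only [iterT_succ, comp_apply, ← htail]
    exact (hη 0).comp_iterate_eq_iterate_comp (hf 0) _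
      (MapsTo.iterT (fun j => hf j.succ) _ hx)

end Iterates

lemma IsAut.bijOn {d : ℕ} {τ : E d → E d} (hτ : IsAut d τ) : BijOn τ (B d) (B d) := by
  obtain ⟨⟨hτB, -⟩, σ, ⟨hσB, -⟩, hστ, hτσ⟩ := hτ
  exact InvOn.bijOn ⟨hστ, hτσ⟩ hτB hσB

lemma IsSemiModel.exists_iterT_eq {q d k : ℕ} {f : Fin k → E q → E q} {ℓ : E q → E d}
    {τ : Fin k → E d → E d} (hsm : IsSemiModel q d k f ℓ τ) {y : E d} (hy : y ∈ B d) :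
    ∃ N, ∃ x ∈ B q, iterT τ N y = ℓ x := by
  rw [← hsm.2] at hy
  obtain ⟨N, -, x, hx, hxy⟩ := mem_iUnion.1 hy
  exact ⟨N, x, hx, hxy.symm⟩

def IsMorphism (q d m k : ℕ) (ℓ : E q → E d) (τ : Fin k → E d → E d) (h : E q → E m)
    (φ : Fin k → E m → E m) (η : E d → E m) : Prop :=
  HolMap d m η ∧ EqOn (η ∘ ℓ) h (B q) ∧ ∀ j, EqOn (η ∘ τ j) (φ j ∘ η) (B d)

namespace IsMorphism

variable {q d m k : ℕ} {f : Fin k → E q → E q} {ℓ : E q → E d} {τ : Fin k → E d → E d}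
  {h : E q → E m} {φ : Fin k → E m → E m} {η β : E d → E m}

lemma iterT_apply_eq_of_iterT_eq (hη : IsMorphism q d m k ℓ τ h φ η)
    (hτ : ∀ j, IsAut d (τ j)) {N : Fin k → ℕ} {x : E q} {y : E d} (hx : x ∈ B q) (hy : y ∈ B d)
    (hxy : iterT τ N y = ℓ x) : iterT φ N (η y) = h x := by
  have hcomm := EqOn.comp_iterT_eq_iterT_comp (fun j => (hτ j).bijOn.mapsTo) hη.2.2 N hy
  simp only [comp_apply] at hcomm
  rw [← hcomm, hxy]
  exact hη.2.1 hx

theorem eqOn (hsm : IsSemiModel q d k f ℓ τ) (hφ : ∀ j, IsAut m (φ j))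
    (hη : IsMorphism q d m k ℓ τ h φ η) (hβ : IsMorphism q d m k ℓ τ h φ β) :
    EqOn η β (B d) := by
  intro y hy
  obtain ⟨N, x, hx, hxy⟩ := hsm.exists_iterT_eq hy
  have hηy := hη.iterT_apply_eq_of_iterT_eq hsm.1.2.1 hx hy hxy
  have hβy := hβ.iterT_apply_eq_of_iterT_eq hsm.1.2.1 hx hy hxy
  exact (BijOn.iterT (fun j => (hφ j).bijOn) N).injOn (hη.1.1 hy) (hβ.1.1 hy) (hηy.trans hβy.symm)

theorem image_eq (hsm : IsSemiModel q d k f ℓ τ) (hφ : ∀ j, IsAut m (φ j))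
    (hη : IsMorphism q d m k ℓ τ h φ η) :
    η '' B d = ⋃ N, B m ∩ iterT φ N ⁻¹' (h '' B q) := by
  have hτ := hsm.1.2.1
  apply Subset.antisymm
  · rintro _ ⟨y, hy, rfl⟩
    obtain ⟨N, x, hx, hxy⟩ := hsm.exists_iterT_eq hy
    exact mem_iUnion.2
      ⟨N, hη.1.1 hy, x, hx, (hη.iterT_apply_eq_of_iterT_eq hτ hx hy hxy).symm⟩
  · intro w hw
    obtain ⟨N, hw, x, hx, hxw⟩ := mem_iUnion.1 hw
    obtain ⟨y, hy, hxy⟩ := (BijOn.iterT (fun j => (hτ j).bijOn) N).surjOn (hsm.1.1.1 hx)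
    refine ⟨y, hy, (BijOn.iterT (fun j => (hφ j).bijOn) N).injOn (hη.1.1 hy) hw ?_⟩
    rw [hη.iterT_apply_eq_of_iterT_eq hτ hx hy hxy, hxw]

end IsMorphism

theorem morphism_unique_and_image_general (q d m k : ℕ) (f : Fin k → E q → E q)
    (ℓ : E q → E d) (τ : Fin k → E d → E d) (hsm : IsSemiModel q d k f ℓ τ)
    (h : E q → E m) (φ : Fin k → E m → E m) (hqm : IsQuasiModel q m k f h φ) :
    (∀ η β : E d → E m,
      HolMap d m η → Set.EqOn (η ∘ ℓ) h (B q) →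
        (∀ j, Set.EqOn (η ∘ τ j) (φ j ∘ η) (B d)) →
      HolMap d m β → Set.EqOn (β ∘ ℓ) h (B q) →
        (∀ j, Set.EqOn (β ∘ τ j) (φ j ∘ β) (B d)) →
      Set.EqOn η β (B d)) ∧
    (∀ η : E d → E m,
      HolMap d m η → Set.EqOn (η ∘ ℓ) h (B q) →
        (∀ j, Set.EqOn (η ∘ τ j) (φ j ∘ η) (B d)) →
      η '' B d = ⋃ N : Fin k → ℕ, B m ∩ (iterT φ N) ⁻¹' (h '' B q)) :=
  ⟨fun _ _ hη hηℓ hητ hβ hβℓ hβτ =>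
      IsMorphism.eqOn hsm hqm.2.1 ⟨hη, hηℓ, hητ⟩ ⟨hβ, hβℓ, hβτ⟩,
    fun _ hη hηℓ hητ => IsMorphism.image_eq hsm hqm.2.1 ⟨hη, hηℓ, hητ⟩⟩

/-- (1) there is at most one morphism from a semi-model to a quasi-model;
(2) the image of such a morphism is `⋃_{N∈ℕ^k} Φ^{−N}(h(𝔹^q))`. -/
theorem morphism_unique_and_image (q d m k : ℕ) (f : Fin k → E q → E q)
    (hf : ∀ j, HolMap q q (f j)) (hcomm : CommutingOn q k f)
    (ℓ : E q → E d) (τ : Fin k → E d → E d) (hsm : IsSemiModel q d k f ℓ τ)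
    (h : E q → E m) (φ : Fin k → E m → E m) (hqm : IsQuasiModel q m k f h φ) :
    (∀ η β : E d → E m,
      HolMap d m η → Set.EqOn (η ∘ ℓ) h (B q) →
        (∀ j, Set.EqOn (η ∘ τ j) (φ j ∘ η) (B d)) →
      HolMap d m β → Set.EqOn (β ∘ ℓ) h (B q) →
        (∀ j, Set.EqOn (β ∘ τ j) (φ j ∘ β) (B d)) →
      Set.EqOn η β (B d)) ∧
    (∀ η : E d → E m,
      HolMap d m η → Set.EqOn (η ∘ ℓ) h (B q) →
        (∀ j, Set.EqOn (η ∘ τ j) (φ j ∘ η) (B d)) →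
      η '' B d = ⋃ N : Fin k → ℕ, B m ∩ (iterT φ N) ⁻¹' (h '' B q)) :=
  morphism_unique_and_image_general q d m k f ℓ τ hsm h φ hqm
end
end

section
/- Let E = (f₁,…,f_k, g₁,…,g_p) be a (k+p)-uple of pairwise commuting holomorphic self-maps of 𝔹^q and let F := (f₁,…,f_k). If (𝔹^a, ℓ, S) is a canonical Kobayashi hyperbolic semi-model for E and (𝔹^b, h, Φ) is a canonical Kobayashi hyperbolic semi-model for F, then a ≤ b; that is, type(E) ≤ type(F). -/
open Set Filter

noncomputable section

/-! If `a > b`, factoring the restriction of the model of `E` to the maps of `F` through the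
canonical model of `F` puts `ℓ(𝔹^q)` inside a holomorphic image of `𝔹^b` in `𝔹^a`.
Pulling back along holomorphic left inverses of the automorphisms `S^N`, the semi-model condition
then covers `𝔹^a` by countably many holomorphic images of `𝔹^b`; by Sard's lemma these are
Lebesgue-null, while `𝔹^a` is not. -/

open MeasureTheory Module

theorem addHaar_image_eq_zero_of_finrank_lt {V W : Type*}
    [NormedAddCommGroup V] [NormedSpace ℝ V] [FiniteDimensional ℝ V]
    [NormedAddCommGroup W] [NormedSpace ℝ W] [FiniteDimensional ℝ W]
    [MeasurableSpace W] [BorelSpace W] (μ : Measure W) [μ.IsAddHaarMeasure]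
    (hdim : finrank ℝ V < finrank ℝ W) {f : V → W} {s : Set V} (hf : DifferentiableOn ℝ f s) :
    μ (f '' s) = 0 := by
  -- Precompose `f` with a linear surjection `π : W → V` to get a self-map of `W` with singular
  -- differential, to which the equidimensional Sard lemma applies.
  obtain ⟨ι, hι⟩ := finrank_le_iff_exists_linearMap.1 hdim.le
  obtain ⟨π₀, hπι⟩ := ι.exists_leftInverse_of_injective (LinearMap.ker_eq_bot.2 hι)
  set π : W →L[ℝ] V := LinearMap.toContinuousLinearMap π₀
  have hπ : Function.Surjective π := fun v => ⟨ι v, LinearMap.congr_fun hπι v⟩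
  have hker : LinearMap.ker π₀ ≠ ⊥ := fun h =>
    hdim.not_ge (LinearMap.finrank_le_finrank_of_injective (LinearMap.ker_eq_bot.1 h))
  rw [← hπ.image_preimage s, ← Set.image_comp]
  refine addHaar_image_eq_zero_of_det_fderivWithin_eq_zero μ
    (f' := fun x => (fderivWithin ℝ f s (π x)).comp π) (fun x hx => ?_) (fun x _ => ?_)
  · exact (hf _ hx).hasFDerivWithinAt.comp x π.hasFDerivWithinAt (Set.mapsTo_preimage π s)
  · exact LinearMap.det_eq_zero_iff_ker_ne_bot.2 fun h =>
      hker (eq_bot_iff.2 (h ▸ LinearMap.ker_le_ker_comp π₀ _))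

theorem HolMap.comp {q m d : ℕ} {g : E m → E d} {f : E q → E m} (hg : HolMap m d g)
    (hf : HolMap q m f) : HolMap q d (g ∘ f) :=
  ⟨hg.1.comp hf.1, hg.2.comp hf.2 hf.1⟩

theorem IsAut.id (d : ℕ) : IsAut d id :=
  ⟨⟨Set.mapsTo_id _, differentiableOn_id⟩, _root_.id, ⟨Set.mapsTo_id _, differentiableOn_id⟩,
    Set.eqOn_refl _ _, Set.eqOn_refl _ _⟩

theorem IsAut.comp {d : ℕ} {σ τ : E d → E d} (hσ : IsAut d σ) (hτ : IsAut d τ) :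
    IsAut d (σ ∘ τ) := by
  obtain ⟨hσ, σ', hσ', hσ'σ, hσσ'⟩ := hσ
  obtain ⟨hτ, τ', hτ', hτ'τ, hττ'⟩ := hτ
  have hleft : Set.LeftInvOn (τ' ∘ σ') (σ ∘ τ) (B d) :=
    Set.LeftInvOn.comp (fun _ hx => hτ'τ hx) (fun _ hx => hσ'σ hx) hτ.1
  have hright : Set.LeftInvOn (σ ∘ τ) (τ' ∘ σ') (B d) :=
    Set.LeftInvOn.comp (fun _ hx => hσσ' hx) (fun _ hx => hττ' hx) hσ'.1
  exact ⟨hσ.comp hτ, τ' ∘ σ', hτ'.comp hσ', fun _ hx => hleft hx, fun _ hx => hright hx⟩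

theorem IsAut.iterate {d : ℕ} {τ : E d → E d} (hτ : IsAut d τ) : ∀ n, IsAut d τ^[n]
  | 0 => IsAut.id d
  | n + 1 => (hτ.iterate n).comp hτ

theorem IsAut.iterT {d k : ℕ} {τ : Fin k → E d → E d} (hτ : ∀ j, IsAut d (τ j))
    (N : Fin k → ℕ) : IsAut d (iterT τ N) := by
  suffices ∀ l : List (E d → E d), (∀ g ∈ l, IsAut d g) → IsAut d (l.foldr (· ∘ ·) _root_.id) by
    refine this _ fun g hg => ?_
    obtain ⟨j, rfl⟩ := List.mem_ofFn.1 hg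
    exact (hτ j).iterate (N j)
  intro l hl
  induction l with
  | nil => exact IsAut.id d
  | cons g l ih =>
    exact (hl g List.mem_cons_self).comp (ih fun g hg => hl g (List.mem_cons_of_mem _ hg))

theorem IsQuasiModel.reindex {q d k k' : ℕ} {f : Fin k → E q → E q} {ℓ : E q → E d}
    {τ : Fin k → E d → E d} (hQ : IsQuasiModel q d k f ℓ τ) (ι : Fin k' → Fin k) :
    IsQuasiModel q d k' (f ∘ ι) ℓ (τ ∘ ι) :=
  ⟨hQ.1, fun j => hQ.2.1 (ι j), fun i j => hQ.2.2.1 (ι i) (ι j), fun j => hQ.2.2.2 (ι j)⟩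

theorem IsSemiModel.exists_subset_iUnion_image {q d k : ℕ} {f : Fin k → E q → E q} {ℓ : E q → E d}
    {τ : Fin k → E d → E d} (hS : IsSemiModel q d k f ℓ τ) :
    ∃ ρ : (Fin k → ℕ) → E d → E d, (∀ N, DifferentiableOn ℂ (ρ N) (B d)) ∧
      B d ⊆ ⋃ N, ρ N '' (ℓ '' B q) := by
  choose ρ hρ hρτ _ using fun N => ((IsAut.iterT hS.1.2.1 N).2)
  refine ⟨ρ, fun N => (hρ N).2, fun y hy => ?_⟩
  rw [← hS.2] at hy
  obtain ⟨N, hyB, hτy⟩ := Set.mem_iUnion.1 hy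
  exact Set.mem_iUnion.2 ⟨N, _, hτy, hρτ N hyB⟩

theorem type_monotone_general (q k p a b : ℕ) (e : Fin (k + p) → E q → E q)
    (ℓ : E q → E a) (S : Fin (k + p) → E a → E a) (hE : IsCSM q a (k + p) e ℓ S)
    (h : E q → E b) (Φ : Fin k → E b → E b)
    (hF : IsCSM q b k (fun j => e (Fin.castAdd p j)) h Φ) :
    a ≤ b := by
  by_contra! hba
  obtain ⟨η, hη, hηh, -⟩ := hF.2 a ℓ _ (hE.1.1.reindex (Fin.castAdd p))
  obtain ⟨ρ, hρ, hcover⟩ := hE.1.exists_subset_iUnion_image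
  have hℓ : ℓ '' B q ⊆ η '' B b := by
    rintro _ ⟨x, hx, rfl⟩
    exact ⟨h x, hF.1.1.1.1 hx, hηh hx⟩
  have hnull : ∀ N, Measure.addHaar ((ρ N ∘ η) '' B b) = 0 := fun N =>
    addHaar_image_eq_zero_of_finrank_lt _
      (by rw [finrank_real_of_complex, finrank_real_of_complex, finrank_euclideanSpace_fin,
        finrank_euclideanSpace_fin]; omega)
      (((hρ N).comp hη.2 hη.1).restrictScalars ℝ)
  have hB : Measure.addHaar (B a) = 0 := by
    refine measure_mono_null (hcover.trans (Set.iUnion_mono fun N => ?_))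
      (measure_iUnion_null hnull)
    rw [Set.image_comp]
    exact Set.image_mono hℓ
  exact (Metric.isOpen_ball.measure_pos _ ⟨0, by simp⟩).ne' hB

/-- for a `(k+p)`-uple `E` of commuting self-maps extending the `k`-uple `F`,
the types satisfy `type(E) ≤ type(F)`: the base dimension `a` of a CSM for `E` is at most
the base dimension `b` of a CSM for `F`. -/
theorem type_monotone (q k p a b : ℕ) (e : Fin (k + p) → E q → E q)
    (he : ∀ j, HolMap q q (e j)) (hcomm : CommutingOn q (k + p) e)
    (ℓ : E q → E a) (S : Fin (k + p) → E a → E a) (hE : IsCSM q a (k + p) e ℓ S)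
    (h : E q → E b) (Φ : Fin k → E b → E b)
    (hF : IsCSM q b k (fun j => e (Fin.castAdd p j)) h Φ) :
    a ≤ b :=
  type_monotone_general q k p a b e ℓ S hE h Φ hF
end
end

section
/- Let F = (f₁,…,f_k) be a k-uple of pairwise commuting holomorphic self-maps of 𝔹^q, let (𝔹^d, h, Φ) be a canonical Kobayashi hyperbolic semi-model for F, and let g be an automorphism of 𝔹^q commuting with every f_j. Then Γ_F(g), the unique holomorphic self-map Γ of 𝔹^d with Γ ∘ h = h ∘ g and Γ ∘ φ_j = φ_j ∘ Γ for all j, is an automorphism of 𝔹^d. -/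
open Set Filter

noncomputable section

/-!
Let `σ` be the inverse of `g`. Since `σ` commutes with every `f_j`, `(𝔹^d, h ∘ σ, Φ)` is again a
quasi-model, so the CSM property yields `Γ'` with `Γ' ∘ h = h ∘ σ` commuting with `Φ`. Then
`Γ ∘ Γ'` and `Γ' ∘ Γ` fix `h(𝔹^q)` pointwise and commute with `Φ`; as the `φ_j` are injective and
every point of `𝔹^d` is sent into `h(𝔹^q)` by some `Φ^N`, both are the identity.
-/

theorem iterT_induction {α : Type} {k : ℕ} {P : (α → α) → Prop} (hid : P id)
    (hcomp : ∀ u v, P u → P v → P (u ∘ v)) {f : Fin k → α → α} (hf : ∀ j, P (f j))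
    (N : Fin k → ℕ) : P (iterT f N) := by
  have hiter : ∀ (u : α → α) (n : ℕ), P u → P u^[n] := by
    intro u n hu
    induction n with
    | zero => exact hid
    | succ n ih => rw [Function.iterate_succ']; exact hcomp _ _ hu ih
  have hfoldr : ∀ L : List (α → α), (∀ u ∈ L, P u) → P (L.foldr (· ∘ ·) id) := by
    intro L hL
    induction L with
    | nil => exact hid
    | cons u L ih =>
      rw [List.foldr_cons]
      exact hcomp _ _ (hL u List.mem_cons_self) (ih fun v hv => hL v (List.mem_cons_of_mem _ hv))
  refine hfoldr _ fun u hu => ?_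
  obtain ⟨j, rfl⟩ := List.mem_ofFn.mp hu
  exact hiter _ _ (hf j)

theorem iterT_mapsTo_injOn {α : Type} {k : ℕ} {S : Set α} {f : Fin k → α → α}
    (hmaps : ∀ j, MapsTo (f j) S S) (hinj : ∀ j, InjOn (f j) S) (N : Fin k → ℕ) :
    MapsTo (iterT f N) S S ∧ InjOn (iterT f N) S :=
  iterT_induction (P := fun u => MapsTo u S S ∧ InjOn u S) ⟨mapsTo_id S, injOn_id S⟩
    (fun _ _ hu hv => ⟨hu.1.comp hv.1, hu.2.comp hv.2 hv.1⟩) (fun j => ⟨hmaps j, hinj j⟩) N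

theorem iterT_eqOn_comm {α : Type} {k : ℕ} {S : Set α} {f : Fin k → α → α} {Δ : α → α}
    (hmaps : ∀ j, MapsTo (f j) S S) (hcomm : ∀ j, EqOn (Δ ∘ f j) (f j ∘ Δ) S)
    (N : Fin k → ℕ) : EqOn (Δ ∘ iterT f N) (iterT f N ∘ Δ) S := by
  refine (iterT_induction (P := fun u => MapsTo u S S ∧ EqOn (Δ ∘ u) (u ∘ Δ) S)
    ⟨mapsTo_id S, fun _ _ => rfl⟩ ?_ (fun j => ⟨hmaps j, hcomm j⟩) N).2
  rintro u v ⟨hu, huΔ⟩ ⟨hv, hvΔ⟩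
  exact ⟨hu.comp hv, fun x hx =>
    (huΔ (hv hx)).trans (congrArg u (hvΔ hx))⟩

theorem eqOn_comm_of_invOn {α : Type} {S : Set α} {g σ u : α → α} (hσ : MapsTo σ S S)
    (hu : MapsTo u S S) (hinv : InvOn σ g S S) (hug : EqOn (u ∘ g) (g ∘ u) S) :
    EqOn (σ ∘ u) (u ∘ σ) S := fun x hx =>
  calc σ (u x) = σ (u (g (σ x))) := by rw [hinv.2 hx]
    _ = σ (g (u (σ x))) := congrArg σ (hug (hσ hx))
    _ = u (σ x) := hinv.1 (hu (hσ hx))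

theorem IsAut.injOn {d : ℕ} {τ : E d → E d} (hτ : IsAut d τ) : InjOn τ (B d) := by
  obtain ⟨-, σ, -, hστ, -⟩ := hτ
  exact LeftInvOn.injOn hστ

theorem IsQuasiModel.comp_right {q d k : ℕ} {f : Fin k → E q → E q} {h : E q → E d}
    {φ : Fin k → E d → E d} (hqm : IsQuasiModel q d k f h φ) {σ : E q → E q}
    (hσ : HolMap q q σ) (hσf : ∀ j, EqOn (σ ∘ f j) (f j ∘ σ) (B q)) :
    IsQuasiModel q d k f (h ∘ σ) φ := by
  obtain ⟨hh, hφ, hφφ, hhf⟩ := hqm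
  exact ⟨⟨hh.1.comp hσ.1, hh.2.comp hσ.2 hσ.1⟩, hφ, hφφ, fun j x hx =>
    (congrArg h (hσf j hx)).trans (hhf j (hσ.1 hx))⟩

theorem IsSemiModel.eqOn_id {q d k : ℕ} {f : Fin k → E q → E q} {h : E q → E d}
    {φ : Fin k → E d → E d} (hsm : IsSemiModel q d k f h φ) {Δ : E d → E d}
    (hΔ : MapsTo Δ (B d) (B d)) (hΔh : EqOn (Δ ∘ h) h (B q))
    (hΔφ : ∀ j, EqOn (Δ ∘ φ j) (φ j ∘ Δ) (B d)) : EqOn Δ id (B d) := by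
  have hφmaps : ∀ j, MapsTo (φ j) (B d) (B d) := fun j => (hsm.1.2.1 j).1.1
  intro y hy
  obtain ⟨N, -, x, hx, hxy⟩ := mem_iUnion.mp (hsm.2.symm ▸ hy : y ∈ _)
  have hN : iterT φ N (Δ y) = iterT φ N y :=
    calc iterT φ N (Δ y) = Δ (iterT φ N y) := (iterT_eqOn_comm hφmaps hΔφ N hy).symm
      _ = Δ (h x) := by rw [hxy]
      _ = iterT φ N y := (hΔh hx).trans hxy
  exact (iterT_mapsTo_injOn hφmaps (fun j => (hsm.1.2.1 j).injOn) N).2 (hΔ hy) hy hN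

theorem IsSemiModel.comp_eqOn_id {q d k : ℕ} {f : Fin k → E q → E q} {h : E q → E d}
    {φ : Fin k → E d → E d} (hsm : IsSemiModel q d k f h φ) {Γ₁ Γ₂ : E d → E d}
    {g₁ g₂ : E q → E q} (hΓ₁ : MapsTo Γ₁ (B d) (B d)) (hΓ₂ : MapsTo Γ₂ (B d) (B d))
    (hg₂ : MapsTo g₂ (B q) (B q)) (hΓ₁h : EqOn (Γ₁ ∘ h) (h ∘ g₁) (B q))
    (hΓ₂h : EqOn (Γ₂ ∘ h) (h ∘ g₂) (B q))
    (hΓ₁φ : ∀ j, EqOn (Γ₁ ∘ φ j) (φ j ∘ Γ₁) (B d))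
    (hΓ₂φ : ∀ j, EqOn (Γ₂ ∘ φ j) (φ j ∘ Γ₂) (B d)) (hg : EqOn (g₁ ∘ g₂) id (B q)) :
    EqOn (Γ₁ ∘ Γ₂) id (B d) := by
  refine hsm.eqOn_id (hΓ₁.comp hΓ₂) (fun x hx => ?_) (fun j y hy => ?_)
  · calc Γ₁ (Γ₂ (h x)) = Γ₁ (h (g₂ x)) := congrArg Γ₁ (hΓ₂h hx)
      _ = h (g₁ (g₂ x)) := hΓ₁h (hg₂ hx)
      _ = h x := congrArg h (hg hx)
  · calc Γ₁ (Γ₂ (φ j y)) = Γ₁ (φ j (Γ₂ y)) := congrArg Γ₁ (hΓ₂φ j hy)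
      _ = φ j (Γ₁ (Γ₂ y)) := hΓ₁φ j (hΓ₂ hy)

theorem Gamma_of_aut_general (q d k : ℕ) (f : Fin k → E q → E q)
    (hf : ∀ j, HolMap q q (f j))
    (h : E q → E d) (φ : Fin k → E d → E d) (hcsm : IsCSM q d k f h φ)
    (g : E q → E q) (hg : IsAut q g)
    (hgcomm : ∀ j, Set.EqOn (f j ∘ g) (g ∘ f j) (B q))
    (Γ : E d → E d) (hΓ : HolMap d d Γ)
    (hΓh : Set.EqOn (Γ ∘ h) (h ∘ g) (B q))
    (hΓφ : ∀ j, Set.EqOn (Γ ∘ φ j) (φ j ∘ Γ) (B d)) :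
    IsAut d Γ := by
  obtain ⟨hgH, σ, hσ, hσg, hgσ⟩ := hg
  have hσf : ∀ j, EqOn (σ ∘ f j) (f j ∘ σ) (B q) := fun j =>
    eqOn_comm_of_invOn hσ.1 (hf j).1 ⟨hσg, hgσ⟩ (hgcomm j)
  obtain ⟨Γ', hΓ', hΓ'h, hΓ'φ⟩ := hcsm.2 d (h ∘ σ) φ (hcsm.1.1.comp_right hσ hσf)
  have hsm := hcsm.1
  exact ⟨hΓ, Γ', hΓ',
    hsm.comp_eqOn_id hΓ'.1 hΓ.1 hgH.1 hΓ'h hΓh hΓ'φ hΓφ hσg,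
    hsm.comp_eqOn_id hΓ.1 hΓ'.1 hσ.1 hΓh hΓ'h hΓφ hΓ'φ hgσ⟩

/-- if `g` is an automorphism of `𝔹^q` commuting with every `f_j`, then
`Γ_F(g)` is an automorphism of the CSM base `𝔹^d`. -/
theorem Gamma_of_aut (q d k : ℕ) (f : Fin k → E q → E q)
    (hf : ∀ j, HolMap q q (f j)) (hcomm : CommutingOn q k f)
    (h : E q → E d) (φ : Fin k → E d → E d) (hcsm : IsCSM q d k f h φ)
    (g : E q → E q) (hg : IsAut q g)
    (hgcomm : ∀ j, Set.EqOn (f j ∘ g) (g ∘ f j) (B q))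
    (Γ : E d → E d) (hΓ : HolMap d d Γ)
    (hΓh : Set.EqOn (Γ ∘ h) (h ∘ g) (B q))
    (hΓφ : ∀ j, Set.EqOn (Γ ∘ φ j) (φ j ∘ Γ) (B d)) :
    IsAut d Γ :=
  Gamma_of_aut_general q d k f hf h φ hcsm g hg hgcomm Γ hΓ hΓh hΓφ
end
end
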